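/- Let (β,α) ∈ Δ such that T_{β,α} has matching. If α_l > 0, then the kneading invariant k₋ of (β,α_l) is a periodic sequence; if α_r < 2−β, then the kneading invariant k₊ of (β,α_r) is a periodic sequence. -/

import Mathlib

noncomputable section

/-- The upper intermediate β-transformation `T⁺_{β,α}` on `[0,1]`. -/
def Tpos (β α : ℝ) (x : ℝ) : ℝ :=
  if x = (1 - α) / β then 0 else Int.fract (β * x + α)

/-- The lower intermediate β-transformation `T⁻_{β,α}` on `[0,1]`. -/
def Tneg (β α : ℝ) (x : ℝ) : ℝ :=
  if x = (1 - α) / β then 1 else Int.fract (β * x + α)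

/-- The itinerary `τ⁺_{β,α}(x)`: index `n` (from 0) is the `(n+1)`-st entry;
entry is `false` (i.e. 0) iff the `n`-th iterate is `< c`. -/
def tauPos (β α x : ℝ) : ℕ → Bool :=
  fun n => if (Tpos β α)^[n] x < (1 - α) / β then false else true

/-- The itinerary `τ⁻_{β,α}(x)`: entry is `false` (i.e. 0) iff the iterate is `≤ c`. -/
def tauNeg (β α x : ℝ) : ℕ → Bool :=
  fun n => if (Tneg β α)^[n] x ≤ (1 - α) / β then false else true

/-- The kneading invariant `k₊` of `(β,α)`. -/
def kPlus (β α : ℝ) : ℕ → Bool := tauPos β α ((1 - α) / β)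

/-- The kneading invariant `k₋` of `(β,α)`. -/
def kMinus (β α : ℝ) : ℕ → Bool := tauNeg β α ((1 - α) / β)

/-- The kneading space `Ω_{β,α}`. -/
def OmegaSet (β α : ℝ) : Set (ℕ → Bool) :=
  (tauPos β α '' Set.Icc 0 1) ∪ (tauNeg β α '' Set.Icc 0 1)

/-- `Ω` is a subshift of finite type: there is a finite set of finite forbidden words
such that `Ω` is exactly the set of sequences avoiding them. -/
def IsSFT (Ω : Set (ℕ → Bool)) : Prop :=
  ∃ F : Finset (List Bool),
    Ω = {ω | ∀ m n : ℕ, List.ofFn (fun i : Fin n => ω (m + i)) ∉ F}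

/-- `T_{β,α}` has matching. -/
def HasMatching (β α : ℝ) : Prop :=
  ∃ n : ℕ, (Tpos β α)^[n] 0 = (Tneg β α)^[n] 1

/-- The matching time: the smallest `n` with `(T⁺)ⁿ(0) = (T⁻)ⁿ(1)`. -/
def matchingTime (β α : ℝ) : ℕ :=
  sInf {n : ℕ | (Tpos β α)^[n] 0 = (Tneg β α)^[n] 1}

/-- `T_{β,α}` and `T_{β,α'}` have the same matching: both have matching, with the same
matching time `n`, and their kneading invariants agree in the first `n+1` entries. -/
def SameMatching (β α α' : ℝ) : Prop :=
  HasMatching β α ∧ HasMatching β α' ∧ matchingTime β α = matchingTime β α' ∧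
    ∀ i ≤ matchingTime β α, kPlus β α i = kPlus β α' i ∧ kMinus β α i = kMinus β α' i

/-- The matching set `I(β,α)` (a subset of `(0, 2-β)`). -/
def matchInterval (β α : ℝ) : Set ℝ :=
  {α' | α' ∈ Set.Ioo (0 : ℝ) (2 - β) ∧ SameMatching β α α'}

/-- The parameter region `Δ`. -/
def DeltaSet : Set (ℝ × ℝ) :=
  {p | p.1 ∈ Set.Ioo (1 : ℝ) 2 ∧ p.2 ∈ Set.Ioo (0 : ℝ) (2 - p.1)}

/-- A sequence in `{0,1}^ℕ` is periodic. -/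
def IsPeriodicSeq (ω : ℕ → Bool) : Prop :=
  ∃ p : ℕ, 1 ≤ p ∧ ∀ n, ω (n + p) = ω n

/-- A sequence in `{0,1}^ℕ` is eventually periodic. -/
def IsEvPeriodicSeq (ω : ℕ → Bool) : Prop :=
  ∃ k : ℕ, IsPeriodicSeq (fun n => ω (n + k))

/-- Strict lexicographic order on `{0,1}^ℕ`: at the first index where they differ,
`ω` has entry 0 and `ν` has entry 1. -/
def lexLt (ω ν : ℕ → Bool) : Prop :=
  ∃ n : ℕ, (∀ m < n, ω m = ν m) ∧ ω n = false ∧ ν n = true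

/-!
Near `α`, the orbits of `0` under `T⁺` and of `1` under `T⁻` follow the words of `α` up to the
matching time `n` exactly as long as the affine "word orbits" stay on the prescribed sides of the
cut point `c(a) = (1 - a) / β`; since the difference of the two word orbits does not depend on
`a`, these finitely many conditions already give the same matching. Each condition is continuous
and monotone in `a`. At `α_l` the conditions hold weakly. If the `T⁻`-orbit of `1` never hits
`c`, neither does the `T⁺`-orbit of `0` (after matching the two orbits coincide until one of them
hits `c`), so all conditions hold strictly at `α_l` and persist slightly to its left,
contradicting minimality; and a hit of `c` makes `k₋` periodic because `T⁻(c) = 1`.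
The reflection `x ↦ 1 - x` conjugates `T⁺_{β,a}` with `T⁻_{β,2-β-a}` and turns the right
endpoint into a left one.
-/

open Set Filter Topology

section Branches

variable {β a x : ℝ}

lemma Tpos_mem_Icc : Tpos β a x ∈ Icc 0 1 := by
  unfold Tpos
  split_ifs
  · exact ⟨le_rfl, zero_le_one⟩
  · exact ⟨Int.fract_nonneg _, (Int.fract_lt_one _).le⟩

lemma Tneg_mem_Icc : Tneg β a x ∈ Icc 0 1 := by
  unfold Tneg
  split_ifs
  · exact ⟨zero_le_one, le_rfl⟩
  · exact ⟨Int.fract_nonneg _, (Int.fract_lt_one _).le⟩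

lemma iterate_Tpos_mem_Icc (hx : x ∈ Icc 0 1) : ∀ j, (Tpos β a)^[j] x ∈ Icc 0 1
  | 0 => hx
  | _ + 1 => by rw [Function.iterate_succ_apply']; exact Tpos_mem_Icc

lemma iterate_Tneg_mem_Icc (hx : x ∈ Icc 0 1) : ∀ j, (Tneg β a)^[j] x ∈ Icc 0 1
  | 0 => hx
  | _ + 1 => by rw [Function.iterate_succ_apply']; exact Tneg_mem_Icc

lemma Tneg_eq_Tpos (hx : x ≠ (1 - a) / β) : Tneg β a x = Tpos β a x := by
  rw [Tneg, Tpos, if_neg hx, if_neg hx]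

lemma Tpos_eq (hβ : 0 < β) (ha : a ∈ Ico 0 (2 - β)) (hx : x ∈ Icc 0 1) :
    Tpos β a x = β * x + a - if (1 - a) / β ≤ x then 1 else 0 := by
  have hcut : (1 - a) / β ≤ x ↔ 1 ≤ β * x + a := by
    rw [div_le_iff₀ hβ]; constructor <;> intro h <;> linarith
  have hβx : β * x ≤ β := by nlinarith [hx.2]
  unfold Tpos
  split_ifs with hc hle hle
  · rw [hc, mul_div_cancel₀ _ hβ.ne']; ring
  · exact absurd hc.ge hle
  · rw [Int.fract_eq_iff]
    exact ⟨by linarith [hcut.1 hle], by linarith [ha.2], 1, by push_cast; ring⟩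
  · rw [sub_zero, Int.fract_eq_self]
    exact ⟨by nlinarith [hx.1, ha.1], by linarith [hcut.not.1 hle]⟩

lemma Tneg_eq (hβ : 0 < β) (ha : a ∈ Ico 0 (2 - β)) (hx : x ∈ Icc 0 1) :
    Tneg β a x = β * x + a - if (1 - a) / β < x then 1 else 0 := by
  by_cases hc : x = (1 - a) / β
  · rw [Tneg, if_pos hc, if_neg hc.not_gt, hc, mul_div_cancel₀ _ hβ.ne']; ring
  · rw [Tneg_eq_Tpos hc, Tpos_eq hβ ha hx]
    simp only [le_iff_lt_or_eq, eq_comm (b := x), hc, or_false]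

end Branches

def wordOrbit (β a : ℝ) (w : ℕ → Bool) (x : ℝ) : ℕ → ℝ
  | 0 => x
  | j + 1 => β * wordOrbit β a w x j + a - if w j then 1 else 0

section WordOrbit

variable {β : ℝ} {v w : ℕ → Bool} {x y : ℝ}

lemma wordOrbit_congr {a : ℝ} {w' : ℕ → Bool} :
    ∀ {j}, (∀ i < j, w i = w' i) → wordOrbit β a w x j = wordOrbit β a w' x j
  | 0, _ => rfl
  | j + 1, h => by
    rw [wordOrbit, wordOrbit, wordOrbit_congr fun i hi => h i (by omega), h j j.lt_succ_self]

lemma wordOrbit_sub_wordOrbit (a b : ℝ) :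
    ∀ j, wordOrbit β a v x j - wordOrbit β a w y j = wordOrbit β b v x j - wordOrbit β b w y j
  | 0 => rfl
  | j + 1 => by
    simp only [wordOrbit]
    linear_combination β * wordOrbit_sub_wordOrbit a b j

lemma continuous_wordOrbit : ∀ j, Continuous fun a => wordOrbit β a w x j
  | 0 => continuous_const
  | j + 1 => by
    simp only [wordOrbit]
    exact ((continuous_const.mul (continuous_wordOrbit j)).add continuous_id).sub continuous_const

lemma monotone_wordOrbit (hβ : 0 ≤ β) : ∀ j, Monotone fun a => wordOrbit β a w x j
  | 0 => monotone_const
  | j + 1 => fun a b hab => by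
    simp only [wordOrbit]
    nlinarith [monotone_wordOrbit hβ j hab]

lemma monotone_wordOrbit_sub_cut (hβ : 0 < β) (j : ℕ) :
    Monotone fun a => wordOrbit β a w x j - (1 - a) / β := fun a b hab => by
  have : (1 - b) / β ≤ (1 - a) / β := by gcongr
  linarith [monotone_wordOrbit (w := w) (x := x) hβ.le j hab]

lemma continuous_cut : Continuous fun a : ℝ => (1 - a) / β :=
  (continuous_const.sub continuous_id).div_const β

end WordOrbit

section Itineraries

variable {β a x : ℝ}

lemma tauPos_apply (j : ℕ) : tauPos β a x j = decide ((1 - a) / β ≤ (Tpos β a)^[j] x) := by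
  unfold tauPos
  split_ifs with h
  · simp [not_le.2 h]
  · simp [not_lt.1 h]

lemma tauNeg_apply (j : ℕ) : tauNeg β a x j = decide ((1 - a) / β < (Tneg β a)^[j] x) := by
  unfold tauNeg
  split_ifs with h
  · simp [not_lt.2 h]
  · simp [not_le.1 h]

lemma iterate_Tpos_eq_wordOrbit (hβ : 0 < β) (ha : a ∈ Ico 0 (2 - β)) (hx : x ∈ Icc 0 1) :
    ∀ j, (Tpos β a)^[j] x = wordOrbit β a (tauPos β a x) x j
  | 0 => rfl
  | j + 1 => by
    rw [Function.iterate_succ_apply', Tpos_eq hβ ha (iterate_Tpos_mem_Icc hx j), wordOrbit,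
      tauPos_apply, iterate_Tpos_eq_wordOrbit hβ ha hx j]
    simp

lemma iterate_Tneg_eq_wordOrbit (hβ : 0 < β) (ha : a ∈ Ico 0 (2 - β)) (hx : x ∈ Icc 0 1) :
    ∀ j, (Tneg β a)^[j] x = wordOrbit β a (tauNeg β a x) x j
  | 0 => rfl
  | j + 1 => by
    rw [Function.iterate_succ_apply', Tneg_eq hβ ha (iterate_Tneg_mem_Icc hx j), wordOrbit,
      tauNeg_apply, iterate_Tneg_eq_wordOrbit hβ ha hx j]
    simp

variable {w : ℕ → Bool} {j n : ℕ}

lemma iterate_Tpos_eq_wordOrbit_of_agree (hβ : 0 < β) (ha : a ∈ Ico 0 (2 - β))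
    (hx : x ∈ Icc 0 1) (h : ∀ i < j, tauPos β a x i = w i) :
    (Tpos β a)^[j] x = wordOrbit β a w x j :=
  (iterate_Tpos_eq_wordOrbit hβ ha hx j).trans (wordOrbit_congr h)

lemma iterate_Tneg_eq_wordOrbit_of_agree (hβ : 0 < β) (ha : a ∈ Ico 0 (2 - β))
    (hx : x ∈ Icc 0 1) (h : ∀ i < j, tauNeg β a x i = w i) :
    (Tneg β a)^[j] x = wordOrbit β a w x j :=
  (iterate_Tneg_eq_wordOrbit hβ ha hx j).trans (wordOrbit_congr h)

/- Being the `T⁺`- resp. `T⁻`-itinerary of `x` up to time `n` (`tauPos_agree_iff`,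
`tauNeg_agree_iff`), expressed through the word orbit, which is continuous and monotone in `a`. -/
def PosAdmissible (β a : ℝ) (w : ℕ → Bool) (x : ℝ) (n : ℕ) : Prop :=
  ∀ j < n, w j = decide ((1 - a) / β ≤ wordOrbit β a w x j)

def NegAdmissible (β a : ℝ) (w : ℕ → Bool) (x : ℝ) (n : ℕ) : Prop :=
  ∀ j < n, w j = decide ((1 - a) / β < wordOrbit β a w x j)

lemma tauPos_agree_iff (hβ : 0 < β) (ha : a ∈ Ico 0 (2 - β)) (hx : x ∈ Icc 0 1) :
    (∀ j < n, tauPos β a x j = w j) ↔ PosAdmissible β a w x n := by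
  have key : ∀ j, (∀ i < j, tauPos β a x i = w i) →
      tauPos β a x j = decide ((1 - a) / β ≤ wordOrbit β a w x j) := fun j h => by
    rw [tauPos_apply, iterate_Tpos_eq_wordOrbit_of_agree hβ ha hx h]
  refine ⟨fun h j hj => ?_, fun h j hj => ?_⟩
  · rw [← h j hj]
    exact key j fun i hi => h i (hi.trans hj)
  · induction j using Nat.strong_induction_on with
    | _ j ih => rw [key j fun i hi => ih i hi (hi.trans hj), h j hj]

lemma tauNeg_agree_iff (hβ : 0 < β) (ha : a ∈ Ico 0 (2 - β)) (hx : x ∈ Icc 0 1) :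
    (∀ j < n, tauNeg β a x j = w j) ↔ NegAdmissible β a w x n := by
  have key : ∀ j, (∀ i < j, tauNeg β a x i = w i) →
      tauNeg β a x j = decide ((1 - a) / β < wordOrbit β a w x j) := fun j h => by
    rw [tauNeg_apply, iterate_Tneg_eq_wordOrbit_of_agree hβ ha hx h]
  refine ⟨fun h j hj => ?_, fun h j hj => ?_⟩
  · rw [← h j hj]
    exact key j fun i hi => h i (hi.trans hj)
  · induction j using Nat.strong_induction_on with
    | _ j ih => rw [key j fun i hi => ih i hi (hi.trans hj), h j hj]

lemma negAdmissible_of_weak (hβ : 0 < β) (ha : a ∈ Ico 0 (2 - β)) (hx : x ∈ Icc 0 1)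
    (hweak : ∀ j < n, if w j then (1 - a) / β ≤ wordOrbit β a w x j
      else wordOrbit β a w x j ≤ (1 - a) / β)
    (havoid : ∀ j < n, (Tneg β a)^[j] x ≠ (1 - a) / β) : NegAdmissible β a w x n := by
  intro j hj
  induction j using Nat.strong_induction_on with
  | _ j ih =>
    have hagree := (tauNeg_agree_iff hβ ha hx).2 fun i hi => ih i hi (hi.trans hj)
    have hne := havoid j hj
    rw [iterate_Tneg_eq_wordOrbit_of_agree hβ ha hx hagree] at hne
    have := hweak j hj
    cases hw : w j <;> rw [hw] at this
    · simpa using this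
    · simpa using lt_of_le_of_ne this hne.symm

end Itineraries

section Matching

variable {β a α : ℝ}

lemma kPlus_zero : kPlus β a 0 = true := by
  simp [kPlus, tauPos]

lemma kMinus_zero : kMinus β a 0 = false := by
  simp [kMinus, tauNeg]

lemma kPlus_succ (j : ℕ) : kPlus β a (j + 1) = tauPos β a 0 j := by
  simp only [kPlus, tauPos, Function.iterate_succ_apply, Tpos, if_pos]

lemma kMinus_succ (j : ℕ) : kMinus β a (j + 1) = tauNeg β a 1 j := by
  simp only [kMinus, tauNeg, Function.iterate_succ_apply, Tneg, if_pos]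

lemma IsPeriodicSeq.comp {ω : ℕ → Bool} (h : IsPeriodicSeq ω) (f : Bool → Bool) :
    IsPeriodicSeq (f ∘ ω) :=
  let ⟨p, hp, hω⟩ := h
  ⟨p, hp, fun n => congrArg f (hω n)⟩

-- `T⁻(c) = 1`, so the orbit of `c` is periodic.
lemma kMinus_periodic_of_iterate_eq_cut {j : ℕ} (h : (Tneg β a)^[j] 1 = (1 - a) / β) :
    IsPeriodicSeq (kMinus β a) := by
  refine ⟨j + 1, j.succ_pos, fun m => ?_⟩
  have hret : (Tneg β a)^[j + 1] ((1 - a) / β) = (1 - a) / β := by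
    rw [Function.iterate_succ_apply, Tneg, if_pos rfl, h]
  simp only [kMinus, tauNeg, Function.iterate_add_apply, hret]

-- Once the `T⁺`-orbit of `x` and the `T⁻`-orbit of `y` meet, they coincide until they reach `c`.
lemma exists_iterate_Tneg_eq_cut {x y : ℝ} :
    ∀ {n : ℕ} (k : ℕ), (Tpos β a)^[n] x = (Tneg β a)^[n] y →
      (Tpos β a)^[n + k] x = (1 - a) / β → ∃ m, (Tneg β a)^[m] y = (1 - a) / β
  | n, 0, hxy, hk => ⟨n, hxy ▸ hk⟩
  | n, k + 1, hxy, hk => by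
    by_cases hc : (Tpos β a)^[n] x = (1 - a) / β
    · exact ⟨n, hxy ▸ hc⟩
    · refine exists_iterate_Tneg_eq_cut (n := n + 1) k ?_ (by rwa [add_right_comm])
      rw [Function.iterate_succ_apply', Function.iterate_succ_apply', ← hxy, Tneg_eq_Tpos hc]

lemma exists_iterate_Tneg_one_eq_cut {n j : ℕ} (hmatch : (Tpos β a)^[n] 0 = (Tneg β a)^[n] 1)
    (hj : (Tpos β a)^[j] 0 = (1 - a) / β) : ∃ m, (Tneg β a)^[m] 1 = (1 - a) / β := by
  have hper : Function.IsPeriodicPt (Tpos β a) (j + 1) 0 := by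
    rw [Function.IsPeriodicPt, Function.IsFixedPt, Function.iterate_succ_apply', hj, Tpos,
      if_pos rfl]
  refine exists_iterate_Tneg_eq_cut (j + n * j) hmatch ?_
  rw [show n + (j + n * j) = j + (j + 1) * n by ring, Function.iterate_add_apply,
    (hper.mul_const n).eq, hj]

lemma isLeast_matchingTime (hM : HasMatching β a) :
    IsLeast {n | (Tpos β a)^[n] 0 = (Tneg β a)^[n] 1} (matchingTime β a) :=
  ⟨Nat.sInf_mem hM, fun _ hm => Nat.sInf_le hm⟩

lemma iterate_sub_iterate_eq_of_agree {b x y : ℝ} {j : ℕ} (hβ : 0 < β)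
    (ha : a ∈ Ico 0 (2 - β)) (hb : b ∈ Ico 0 (2 - β)) (hx : x ∈ Icc 0 1) (hy : y ∈ Icc 0 1)
    (hpos : ∀ i < j, tauPos β a x i = tauPos β b x i)
    (hneg : ∀ i < j, tauNeg β a y i = tauNeg β b y i) :
    (Tpos β a)^[j] x - (Tneg β a)^[j] y = (Tpos β b)^[j] x - (Tneg β b)^[j] y := by
  rw [iterate_Tpos_eq_wordOrbit_of_agree hβ ha hx hpos,
    iterate_Tneg_eq_wordOrbit_of_agree hβ ha hy hneg, iterate_Tpos_eq_wordOrbit hβ hb hx,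
    iterate_Tneg_eq_wordOrbit hβ hb hy]
  exact wordOrbit_sub_wordOrbit a b j

lemma sameMatching_iff (hβ : 0 < β) (hα : α ∈ Ico 0 (2 - β)) (ha : a ∈ Ico 0 (2 - β))
    (hM : HasMatching β α) :
    SameMatching β α a ↔ ∀ j < matchingTime β α,
      tauPos β a 0 j = tauPos β α 0 j ∧ tauNeg β a 1 j = tauNeg β α 1 j := by
  refine ⟨fun ⟨_, _, _, hk⟩ j hj => ?_, fun h => ?_⟩
  · have := hk (j + 1) hj
    rw [kPlus_succ, kPlus_succ, kMinus_succ, kMinus_succ] at this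
    exact ⟨this.1.symm, this.2.symm⟩
  set n := matchingTime β α
  have hiff : ∀ m ≤ n, (Tpos β a)^[m] 0 = (Tneg β a)^[m] 1 ↔
      (Tpos β α)^[m] 0 = (Tneg β α)^[m] 1 := fun m hm => by
    rw [← sub_eq_zero, iterate_sub_iterate_eq_of_agree hβ ha hα (left_mem_Icc.2 zero_le_one)
      (right_mem_Icc.2 zero_le_one) (fun i hi => (h i (by omega)).1)
      (fun i hi => (h i (by omega)).2), sub_eq_zero]
  have hleast : IsLeast {m | (Tpos β a)^[m] 0 = (Tneg β a)^[m] 1} n :=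
    ⟨(hiff n le_rfl).2 (isLeast_matchingTime hM).1, fun m hm => by
      by_contra! hmn
      exact hmn.not_ge ((isLeast_matchingTime hM).2 ((hiff m hmn.le).1 hm))⟩
  refine ⟨hM, ⟨n, hleast.1⟩, hleast.csInf_eq.symm, fun i hi => ?_⟩
  cases i with
  | zero => simp only [kPlus_zero, kMinus_zero, and_self]
  | succ j =>
    rw [kPlus_succ, kPlus_succ, kMinus_succ, kMinus_succ]
    exact ⟨(h j hi).1.symm, (h j hi).2.symm⟩

lemma self_mem_matchInterval (hα : α ∈ Ioo 0 (2 - β)) (hM : HasMatching β α) :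
    α ∈ matchInterval β α :=
  ⟨hα, hM, hM, rfl, fun _ _ => ⟨rfl, rfl⟩⟩

lemma mem_matchInterval_iff (hβ : 0 < β) (hα : α ∈ Ico 0 (2 - β)) (hM : HasMatching β α) :
    a ∈ matchInterval β α ↔ a ∈ Ioo 0 (2 - β) ∧
      PosAdmissible β a (tauPos β α 0) 0 (matchingTime β α) ∧
      NegAdmissible β a (tauNeg β α 1) 1 (matchingTime β α) := by
  refine and_congr_right fun ha => ?_
  have ha' := Ioo_subset_Ico_self ha
  rw [sameMatching_iff hβ hα ha' hM, ← tauPos_agree_iff hβ ha' (left_mem_Icc.2 zero_le_one),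
    ← tauNeg_agree_iff hβ ha' (right_mem_Icc.2 zero_le_one)]
  exact forall₂_and

end Matching

section Perturbation

variable {β L x : ℝ} {w : ℕ → Bool} {n : ℕ}

lemma eventually_decide_eq {f g : ℝ → ℝ} (hf : ContinuousAt f L) (hg : ContinuousAt g L)
    (hne : f L ≠ g L) : ∀ᶠ a in 𝓝 L,
      decide (f a ≤ g a) = decide (f L ≤ g L) ∧ decide (f a < g a) = decide (f L < g L) := by
  rcases hne.lt_or_gt with h | h
  · filter_upwards [hf.eventually_lt hg h] with a ha
    simp [ha, ha.le, h, h.le]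
  · filter_upwards [hg.eventually_lt hf h] with a ha
    simp [ha.not_ge, ha.not_gt, h.not_ge, h.not_gt]

lemma PosAdmissible.eventually (h : PosAdmissible β L w x n)
    (hne : ∀ j < n, wordOrbit β L w x j ≠ (1 - L) / β) :
    ∀ᶠ a in 𝓝 L, PosAdmissible β a w x n := by
  refine (eventually_all_finite (finite_Iio n)).2 fun j hj => ?_
  filter_upwards [eventually_decide_eq continuous_cut.continuousAt
    (continuous_wordOrbit j).continuousAt (hne j hj).symm] with a ha
  rw [ha.1]
  exact h j hj

lemma NegAdmissible.eventually (h : NegAdmissible β L w x n)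
    (hne : ∀ j < n, wordOrbit β L w x j ≠ (1 - L) / β) :
    ∀ᶠ a in 𝓝 L, NegAdmissible β a w x n := by
  refine (eventually_all_finite (finite_Iio n)).2 fun j hj => ?_
  filter_upwards [eventually_decide_eq continuous_cut.continuousAt
    (continuous_wordOrbit j).continuousAt (hne j hj).symm] with a ha
  rw [ha.2]
  exact h j hj

end Perturbation

section LeftEndpoint

variable {β α : ℝ}

lemma posAdmissible_sInf_matchInterval (hβ : 0 < β) (hα : α ∈ Ioo 0 (2 - β))
    (hM : HasMatching β α) :
    PosAdmissible β (sInf (matchInterval β α)) (tauPos β α 0) 0 (matchingTime β α) := by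
  have hαI := self_mem_matchInterval hα hM
  have hbdd : BddBelow (matchInterval β α) := ⟨0, fun a ha => ha.1.1.le⟩
  have hI := fun a (ha : a ∈ matchInterval β α) => ((mem_matchInterval_iff hβ (Ioo_subset_Ico_self hα) hM).1 ha).2.1
  intro j hj
  cases hv : tauPos β α 0 j
  · have hαj := hI α hαI j hj
    rw [hv, eq_comm, decide_eq_false_iff_not, not_le, ← sub_neg] at hαj
    rw [eq_comm, decide_eq_false_iff_not, not_le, ← sub_neg]
    exact (monotone_wordOrbit_sub_cut hβ j (csInf_le hbdd hαI)).trans_lt hαj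
  · rw [eq_comm, decide_eq_true_iff]
    refine (isClosed_le continuous_cut (continuous_wordOrbit j)).closure_subset_iff.2
      (fun a ha => ?_) (csInf_mem_closure ⟨α, hαI⟩ hbdd)
    have haj := hI a ha j hj
    rwa [hv, eq_comm, decide_eq_true_iff] at haj

lemma weakNeg_sInf_matchInterval (hβ : 0 < β) (hα : α ∈ Ioo 0 (2 - β))
    (hM : HasMatching β α) : ∀ j < matchingTime β α,
      if tauNeg β α 1 j then
        (1 - sInf (matchInterval β α)) / β ≤
          wordOrbit β (sInf (matchInterval β α)) (tauNeg β α 1) 1 j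
      else wordOrbit β (sInf (matchInterval β α)) (tauNeg β α 1) 1 j ≤
        (1 - sInf (matchInterval β α)) / β := by
  have hαI := self_mem_matchInterval hα hM
  have hbdd : BddBelow (matchInterval β α) := ⟨0, fun a ha => ha.1.1.le⟩
  have hI := fun a (ha : a ∈ matchInterval β α) => ((mem_matchInterval_iff hβ (Ioo_subset_Ico_self hα) hM).1 ha).2.2
  intro j hj
  cases hw : tauNeg β α 1 j
  · have hαj := hI α hαI j hj
    rw [hw, eq_comm, decide_eq_false_iff_not, not_lt, ← sub_nonpos] at hαj
    rw [if_neg Bool.false_ne_true, ← sub_nonpos]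
    exact (monotone_wordOrbit_sub_cut hβ j (csInf_le hbdd hαI)).trans hαj
  · rw [if_pos rfl]
    refine (isClosed_le continuous_cut (continuous_wordOrbit j)).closure_subset_iff.2
      (fun a ha => ?_) (csInf_mem_closure ⟨α, hαI⟩ hbdd)
    have haj := hI a ha j hj
    rw [hw, eq_comm, decide_eq_true_iff] at haj
    exact haj.le

theorem kMinus_sInf_matchInterval_periodic (hβ : 0 < β) (hα : α ∈ Ioo 0 (2 - β))
    (hM : HasMatching β α) (hL : 0 < sInf (matchInterval β α)) :
    IsPeriodicSeq (kMinus β (sInf (matchInterval β α))) := by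
  set I := matchInterval β α
  set L := sInf I
  set n := matchingTime β α
  have hbdd : BddBelow I := ⟨0, fun a ha => ha.1.1.le⟩
  have hLα : L ≤ α := csInf_le hbdd (self_mem_matchInterval hα hM)
  have hL' : L ∈ Ico 0 (2 - β) := ⟨hL.le, hLα.trans_lt hα.2⟩
  have h0 : (0 : ℝ) ∈ Icc 0 1 := left_mem_Icc.2 zero_le_one
  have h1 : (1 : ℝ) ∈ Icc 0 1 := right_mem_Icc.2 zero_le_one
  by_cases hhit : ∃ m, (Tneg β L)^[m] 1 = (1 - L) / β
  · obtain ⟨m, hm⟩ := hhit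
    exact kMinus_periodic_of_iterate_eq_cut hm
  simp only [not_exists] at hhit
  have hpos := posAdmissible_sInf_matchInterval hβ hα hM
  have hneg := negAdmissible_of_weak hβ hL' h1 (weakNeg_sInf_matchInterval hβ hα hM)
    fun j _ => hhit j
  have hpos' := (tauPos_agree_iff hβ hL' h0).2 hpos
  have hneg' := (tauNeg_agree_iff hβ hL' h1).2 hneg
  have hmatch : (Tpos β L)^[n] 0 = (Tneg β L)^[n] 1 := by
    rw [← sub_eq_zero, iterate_sub_iterate_eq_of_agree hβ hL' (Ioo_subset_Ico_self hα) h0 h1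
      hpos' hneg', sub_eq_zero]
    exact (isLeast_matchingTime hM).1
  have hposne : ∀ j < n, wordOrbit β L (tauPos β α 0) 0 j ≠ (1 - L) / β := fun j hj h => by
    rw [← iterate_Tpos_eq_wordOrbit_of_agree hβ hL' h0 fun i hi => hpos' i (hi.trans hj)] at h
    exact (exists_iterate_Tneg_one_eq_cut hmatch h).elim hhit
  have hnegne : ∀ j < n, wordOrbit β L (tauNeg β α 1) 1 j ≠ (1 - L) / β := fun j hj => by
    rw [← iterate_Tneg_eq_wordOrbit_of_agree hβ hL' h1 fun i hi => hneg' i (hi.trans hj)]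
    exact hhit j
  obtain ⟨A, hAL, hAv, hAw, hA⟩ := ((hpos.eventually hposne).and
    ((hneg.eventually hnegne).and (lt_mem_nhds hL))).exists_lt
  have hAI : A ∈ I := (mem_matchInterval_iff hβ (Ioo_subset_Ico_self hα) hM).2
    ⟨⟨hA, by linarith [hα.2]⟩, hAv, hAw⟩
  exact absurd (csInf_le hbdd hAI) hAL.not_ge

end LeftEndpoint

section Reflection

variable {β a b : ℝ}

lemma one_sub_Tpos (hβ : 0 < β) (ha : 0 < a) (hb : 0 < b) (hab : a + b = 2 - β) {x : ℝ}
    (hx : x ∈ Icc 0 1) : 1 - Tpos β a x = Tneg β b (1 - x) := by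
  have hcut : (1 - b) / β < 1 - x ↔ ¬(1 - a) / β ≤ x := by
    rw [not_le, div_lt_iff₀ hβ, lt_div_iff₀ hβ]
    constructor <;> intro h <;> linarith
  rw [Tpos_eq hβ ⟨ha.le, by linarith⟩ hx,
    Tneg_eq hβ ⟨hb.le, by linarith⟩ ⟨by linarith [hx.2], by linarith [hx.1]⟩]
  by_cases h : (1 - a) / β ≤ x
  · rw [if_pos h, if_neg (hcut.not.2 (not_not.2 h))]; linarith
  · rw [if_neg h, if_pos (hcut.2 h)]; linarith

lemma one_sub_iterate_Tpos (hβ : 0 < β) (ha : 0 < a) (hb : 0 < b) (hab : a + b = 2 - β)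
    {x : ℝ} (hx : x ∈ Icc 0 1) : ∀ j, 1 - (Tpos β a)^[j] x = (Tneg β b)^[j] (1 - x)
  | 0 => rfl
  | j + 1 => by
    rw [Function.iterate_succ_apply', Function.iterate_succ_apply',
      one_sub_Tpos hβ ha hb hab (iterate_Tpos_mem_Icc hx j), one_sub_iterate_Tpos hβ ha hb hab hx j]

lemma kMinus_eq_not_kPlus (hβ : 0 < β) (ha : 0 < a) (hb : 0 < b) (hab : a + b = 2 - β)
    (i : ℕ) : kMinus β b i = !kPlus β a i := by
  cases i with
  | zero => rw [kMinus_zero, kPlus_zero, Bool.not_true]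
  | succ j =>
    have hcut : (1 - b) / β = 1 - (1 - a) / β := by
      field_simp
      linarith
    rw [kMinus_succ, kPlus_succ, tauNeg_apply, tauPos_apply, ← sub_zero (1 : ℝ),
      ← one_sub_iterate_Tpos hβ ha hb hab (left_mem_Icc.2 zero_le_one), sub_zero, hcut]
    simp only [← not_le, sub_le_sub_iff_left, decide_not]

lemma kPlus_eq_not_kMinus (hβ : 0 < β) (ha : 0 < a) (hb : 0 < b) (hab : a + b = 2 - β)
    (i : ℕ) : kPlus β b i = !kMinus β a i := by
  rw [kMinus_eq_not_kPlus hβ hb ha (by linarith), Bool.not_not]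

lemma iterate_match_iff_of_add_eq (hβ : 0 < β) (ha : 0 < a) (hb : 0 < b)
    (hab : a + b = 2 - β) (n : ℕ) :
    (Tpos β b)^[n] 0 = (Tneg β b)^[n] 1 ↔ (Tpos β a)^[n] 0 = (Tneg β a)^[n] 1 := by
  have h₁ := one_sub_iterate_Tpos hβ ha hb hab (left_mem_Icc.2 zero_le_one) n
  have h₂ := one_sub_iterate_Tpos hβ hb ha (by linarith) (left_mem_Icc.2 zero_le_one) n
  rw [sub_zero] at h₁ h₂
  constructor <;> intro h <;> linarith

lemma hasMatching_iff_of_add_eq (hβ : 0 < β) (ha : 0 < a) (hb : 0 < b)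
    (hab : a + b = 2 - β) : HasMatching β b ↔ HasMatching β a :=
  exists_congr (iterate_match_iff_of_add_eq hβ ha hb hab)

lemma matchingTime_eq_of_add_eq (hβ : 0 < β) (ha : 0 < a) (hb : 0 < b)
    (hab : a + b = 2 - β) : matchingTime β b = matchingTime β a := by
  simp only [matchingTime, iterate_match_iff_of_add_eq hβ ha hb hab]

lemma sameMatching_iff_of_add_eq {a' b' : ℝ} (hβ : 0 < β) (ha : 0 < a) (hb : 0 < b)
    (hab : a + b = 2 - β) (ha' : 0 < a') (hb' : 0 < b') (hab' : a' + b' = 2 - β) :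
    SameMatching β b b' ↔ SameMatching β a a' := by
  simp only [SameMatching, hasMatching_iff_of_add_eq hβ ha hb hab,
    hasMatching_iff_of_add_eq hβ ha' hb' hab', matchingTime_eq_of_add_eq hβ ha hb hab,
    matchingTime_eq_of_add_eq hβ ha' hb' hab', kPlus_eq_not_kMinus hβ ha hb hab,
    kPlus_eq_not_kMinus hβ ha' hb' hab', kMinus_eq_not_kPlus hβ ha hb hab,
    kMinus_eq_not_kPlus hβ ha' hb' hab', Bool.not_inj_iff]
  exact and_congr_right' <| and_congr_right' <| and_congr_right' <|
    forall₂_congr fun _ _ => and_comm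

variable {α : ℝ}

lemma matchInterval_reflect (hβ : 0 < β) (hα : α ∈ Ioo 0 (2 - β)) :
    matchInterval β (2 - β - α) = (fun a => 2 - β - a) '' matchInterval β α := by
  have hsame := fun {a : ℝ} (ha : a ∈ Ioo 0 (2 - β)) =>
    sameMatching_iff_of_add_eq (a' := a) (b' := 2 - β - a) hβ hα.1 (sub_pos.2 hα.2) (by ring)
      ha.1 (sub_pos.2 ha.2) (by ring)
  ext a'
  constructor
  · rintro ⟨ha', hS⟩
    have ha : 2 - β - a' ∈ Ioo 0 (2 - β) := ⟨sub_pos.2 ha'.2, by linarith [ha'.1]⟩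
    refine ⟨2 - β - a', ⟨ha, (hsame ha).1 ?_⟩, sub_sub_cancel _ _⟩
    rwa [sub_sub_cancel]
  · rintro ⟨a, ⟨ha, hS⟩, rfl⟩
    exact ⟨⟨sub_pos.2 ha.2, by linarith [ha.1]⟩, (hsame ha).2 hS⟩

lemma sInf_matchInterval_reflect (hβ : 0 < β) (hα : α ∈ Ioo 0 (2 - β))
    (hM : HasMatching β α) :
    sInf (matchInterval β (2 - β - α)) = 2 - β - sSup (matchInterval β α) := by
  rw [matchInterval_reflect hβ hα]
  exact (Antitone.map_csSup_of_continuousAt (continuous_sub_left _).continuousAt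
    (fun _ _ h => sub_le_sub_left h _) ⟨α, self_mem_matchInterval hα hM⟩
    ⟨2 - β, fun _ ha => ha.1.2.le⟩).symm

theorem kPlus_sSup_matchInterval_periodic (hβ : 0 < β) (hα : α ∈ Ioo 0 (2 - β))
    (hM : HasMatching β α) (hR : sSup (matchInterval β α) < 2 - β) :
    IsPeriodicSeq (kPlus β (sSup (matchInterval β α))) := by
  set R := sSup (matchInterval β α)
  have hαR : α ≤ R := le_csSup ⟨2 - β, fun _ ha => ha.1.2.le⟩ (self_mem_matchInterval hα hM)
  have hα' : 2 - β - α ∈ Ioo 0 (2 - β) := ⟨sub_pos.2 hα.2, by linarith [hα.1]⟩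
  have hM' := (hasMatching_iff_of_add_eq hβ hα.1 hα'.1 (by ring)).2 hM
  have hinf := sInf_matchInterval_reflect hβ hα hM
  have hper := kMinus_sInf_matchInterval_periodic hβ hα' hM' (by rw [hinf]; linarith)
  rw [hinf] at hper
  have hR' : kPlus β R = (!·) ∘ kMinus β (2 - β - R) :=
    funext <| kPlus_eq_not_kMinus hβ (sub_pos.2 hR) (by linarith [hα.1]) (by ring)
  rw [hR']
  exact hper.comp _

end Reflection

theorem endpoint_kneading_periodic (β α : ℝ)
    (hβ : β ∈ Set.Ioo (1 : ℝ) 2) (hα : α ∈ Set.Ioo (0 : ℝ) (2 - β))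
    (hM : HasMatching β α) :
    (0 < sInf (matchInterval β α) → IsPeriodicSeq (kMinus β (sInf (matchInterval β α)))) ∧
    (sSup (matchInterval β α) < 2 - β → IsPeriodicSeq (kPlus β (sSup (matchInterval β α)))) := by
  have hβ₀ : 0 < β := one_pos.trans hβ.1
  exact ⟨kMinus_sInf_matchInterval_periodic hβ₀ hα hM, kPlus_sSup_matchInterval_periodic hβ₀ hα hM⟩
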